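/- arXiv:2107.01718 — 3 statements merged into one kernel-verified Lean document; each statement's English description precedes it below -/
import Mathlib

section
/- Let μ, ν ∈ P₂,ac(ℝ^d) be absolutely continuous probability measures with finite second moments, and let μ̃, ν̃ ∈ P₂(ℝ^d). Suppose the optimal transport map T₀ from μ to ν is L-Lipschitz and let φ₀ be the convex potential with ∇φ₀ = T₀. Let ν̄ = T₀ # μ̃. Then for every optimal coupling γ between μ̃ and ν̃, (1/(2L)) ∫‖T_γ(x) − T₀(x)‖² dμ̃(x) ≤ (1/2)(W₂²(μ̃, ν̃) − W₂²(μ̃, ν̄)) + ∫(φ₀*(y) − ½‖y‖²) d(ν̃ − ν̄)(y), where T_γ is the barycentric projection of γ. -/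
open MeasureTheory
open scoped RealInnerProductSpace

/-- Squared 2-Wasserstein distance, as the infimum of the squared-Euclidean transport
cost over all couplings. -/
noncomputable def W2sq {d : ℕ}
    (μ ν : Measure (EuclideanSpace ℝ (Fin d))) : ℝ :=
  sInf {c : ℝ | ∃ π : Measure (EuclideanSpace ℝ (Fin d) × EuclideanSpace ℝ (Fin d)),
    π.map Prod.fst = μ ∧ π.map Prod.snd = ν ∧ c = ∫ p, ‖p.1 - p.2‖ ^ 2 ∂π}

variable {d : ℕ}
local notation "E" => EuclideanSpace ℝ (Fin d)

lemma grad_line (φ : E → ℝ) (hdiff : Differentiable ℝ φ) (x v : E) (t : ℝ) :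
    HasDerivAt (fun s : ℝ => φ (x + s • v)) ⟪gradient φ (x + t • v), v⟫ t := by
  have h1 : HasDerivAt (fun s : ℝ => x + s • v) v t := by
    simpa using ((hasDerivAt_id t).smul_const v).const_add x
  have h2 := ((hdiff (x + t • v)).hasGradientAt).hasFDerivAt
  have := h2.comp_hasDerivAt t h1
  exact this.congr_deriv (by simp [InnerProductSpace.toDual])

lemma subgrad (φ : E → ℝ) (hφ : ConvexOn ℝ Set.univ φ) (hdiff : Differentiable ℝ φ)
    (x z : E) : φ x + ⟪gradient φ x, z - x⟫ ≤ φ z := by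
  set g : ℝ → ℝ := fun s => φ (x + s • (z - x)) with hg
  have hgeq : g = φ ∘ (AffineMap.lineMap x z : ℝ →ᵃ[ℝ] E) := by
    funext s
    simp [g, AffineMap.lineMap_apply, add_comm]
  have hgc : ConvexOn ℝ Set.univ g := by
    rw [hgeq]
    simpa using hφ.comp_affineMap (AffineMap.lineMap x z : ℝ →ᵃ[ℝ] E)
  have hd0 := grad_line φ hdiff x (z - x) 0
  have hle := hgc.le_slope_of_hasDerivAt (Set.mem_univ (0:ℝ)) (Set.mem_univ (1:ℝ))
    one_pos (by simpa using hd0 : HasDerivAt g ⟪gradient φ (x + (0:ℝ) • (z - x)), z - x⟫ 0)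
  have hs : slope g 0 1 = g 1 - g 0 := by simp [slope_def_field]
  rw [hs] at hle
  have hg1 : g 1 = φ z := by simp [g]
  have hg0 : g 0 = φ x := by simp [g]
  simp only [zero_smul, add_zero] at hle
  rw [hg1, hg0] at hle
  linarith

lemma descent (φ : E → ℝ) (hdiff : Differentiable ℝ φ) (L : ℝ) (hL0 : 0 ≤ L)
    (hLip : ∀ a b, ‖gradient φ a - gradient φ b‖ ≤ L * ‖a - b‖) (x v : E) :
    φ (x + v) ≤ φ x + ⟪gradient φ x, v⟫ + L / 2 * ‖v‖ ^ 2 := by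
  have hTc : Continuous (gradient φ) := by
    refine (LipschitzWith.of_dist_le_mul (K := ⟨L, hL0⟩) ?_).continuous
    intro a b
    rw [dist_eq_norm, dist_eq_norm]; exact hLip a b
  set g' : ℝ → ℝ := fun t => ⟪gradient φ (x + t • v), v⟫ with hg'
  have hcont : Continuous g' := by
    exact (hTc.comp (by continuity)).inner continuous_const
  have hftc : ∫ t in (0:ℝ)..1, g' t = φ (x + v) - φ x := by
    have := intervalIntegral.integral_eq_sub_of_hasDerivAt
      (f := fun s : ℝ => φ (x + s • v)) (f' := g')
      (fun t _ => grad_line φ hdiff x v t) (hcont.intervalIntegrable 0 1)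
    simpa using this
  have hptw : ∀ t ∈ Set.Icc (0:ℝ) 1,
      g' t ≤ ⟪gradient φ x, v⟫ + t * (L * ‖v‖ ^ 2) := by
    intro t ht
    have h1 : g' t - ⟪gradient φ x, v⟫ = ⟪gradient φ (x + t • v) - gradient φ x, v⟫ := by
      simp [g', inner_sub_left]
    have h2 : ⟪gradient φ (x + t • v) - gradient φ x, v⟫ ≤
        ‖gradient φ (x + t • v) - gradient φ x‖ * ‖v‖ := real_inner_le_norm _ _
    have h3 : ‖gradient φ (x + t • v) - gradient φ x‖ ≤ L * (t * ‖v‖) := by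
      have := hLip (x + t • v) x
      simpa [norm_smul, abs_of_nonneg ht.1] using this
    nlinarith [norm_nonneg v, mul_le_mul_of_nonneg_right h3 (norm_nonneg v)]
  have hint2 : IntervalIntegrable (fun t : ℝ => ⟪gradient φ x, v⟫ + t * (L * ‖v‖ ^ 2))
      MeasureTheory.volume 0 1 := (by continuity : Continuous _).intervalIntegrable 0 1
  have hmono := intervalIntegral.integral_mono_on zero_le_one (hcont.intervalIntegrable 0 1) hint2 hptw
  have hval : ∫ t in (0:ℝ)..1, (⟪gradient φ x, v⟫ + t * (L * ‖v‖ ^ 2))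
      = ⟪gradient φ x, v⟫ + L / 2 * ‖v‖ ^ 2 := by
    have hmc : IntervalIntegrable (fun t : ℝ => t * (L * ‖v‖ ^ 2)) volume 0 1 := by
      apply Continuous.intervalIntegrable
      continuity
    rw [intervalIntegral.integral_add intervalIntegrable_const hmc]
    have : ∫ t in (0:ℝ)..1, t * (L * ‖v‖ ^ 2) = (L * ‖v‖ ^ 2) / 2 := by
      rw [intervalIntegral.integral_mul_const, integral_id]
      ring
    rw [this]
    norm_num
    ring
  rw [hftc, hval] at hmono
  linarith

lemma key_ptwise (φ : E → ℝ) (hφ : ConvexOn ℝ Set.univ φ) (hdiff : Differentiable ℝ φ)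
    (L : ℝ) (hL : 0 < L)
    (hLip : ∀ a b, ‖gradient φ a - gradient φ b‖ ≤ L * ‖a - b‖)
    (φstar : E → ℝ)
    (hstar : ∀ y, IsLUB {c : ℝ | ∃ x, c = ⟪x, y⟫ - φ x} (φstar y))
    (x y : E) :
    1 / (2 * L) * ‖y - gradient φ x‖ ^ 2 ≤
      φstar y - φstar (gradient φ x) - ⟪x, y⟫ + ⟪x, gradient φ x⟫ := by
  have heq : φstar (gradient φ x) = ⟪x, gradient φ x⟫ - φ x := by
    refine le_antisymm ((hstar _).2 ?_) ((hstar _).1 ⟨x, rfl⟩)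
    rintro c ⟨z, rfl⟩
    have h := subgrad φ hφ hdiff x z
    have h2 : ⟪gradient φ x, z - x⟫ = ⟪z, gradient φ x⟫ - ⟪x, gradient φ x⟫ := by
      rw [real_inner_comm, inner_sub_left]
    linarith
  set w : E := y - gradient φ x with hw
  have hd := descent φ hdiff L hL.le hLip x (L⁻¹ • w)
  have hmem := (hstar y).1 ⟨x + L⁻¹ • w, rfl⟩
  have e1 : ⟪x + L⁻¹ • w, y⟫ = ⟪x, y⟫ + L⁻¹ * ⟪w, y⟫ := by
    rw [inner_add_left, real_inner_smul_left]
  have e2 : ⟪gradient φ x, L⁻¹ • w⟫ = L⁻¹ * ⟪gradient φ x, w⟫ :=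
    real_inner_smul_right _ _ _
  have e3 : ‖L⁻¹ • w‖ ^ 2 = L⁻¹ ^ 2 * ‖w‖ ^ 2 := by
    rw [norm_smul, Real.norm_eq_abs, abs_inv, abs_of_pos hL]
    ring
  have e4 : ⟪w, y⟫ = ‖w‖ ^ 2 + ⟪gradient φ x, w⟫ := by
    have h5 : ⟪w, y⟫ - ⟪w, gradient φ x⟫ = ⟪w, w⟫ := by
      rw [← inner_sub_right]
    rw [real_inner_self_eq_norm_sq] at h5
    rw [real_inner_comm (gradient φ x) w] at h5
    linarith
  rw [e1, e4] at hmem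
  rw [e2, e3] at hd
  have harith : L⁻¹ * (‖w‖ ^ 2 + ⟪gradient φ x, w⟫) - L⁻¹ * ⟪gradient φ x, w⟫
      - L / 2 * (L⁻¹ ^ 2 * ‖w‖ ^ 2) = 1 / (2 * L) * ‖w‖ ^ 2 := by
    field_simp
    ring
  rw [heq]
  linarith

section Helpers
variable {α : Type*} [MeasurableSpace α] {μ' : Measure α}

lemma int_inner' {F : Type*} [NormedAddCommGroup F] [InnerProductSpace ℝ F]
    (f g : α → F) (hf : MemLp f 2 μ') (hg : MemLp g 2 μ') :
    Integrable (fun a => ⟪f a, g a⟫) μ' := by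
  have h := L2.integrable_inner (𝕜 := ℝ) (hf.toLp f) (hg.toLp g)
  refine h.congr ?_
  filter_upwards [hf.coeFn_toLp, hg.coeFn_toLp] with a h1 h2
  rw [h1, h2]

lemma int_sq {F : Type*} [NormedAddCommGroup F] [InnerProductSpace ℝ F]
    (f : α → F) (hf : MemLp f 2 μ') :
    Integrable (fun a => ‖f a‖ ^ 2) μ' := by
  have h := int_inner' f f hf hf
  refine h.congr ?_
  filter_upwards with a
  rw [real_inner_self_eq_norm_sq]

lemma int_mul (f g : α → ℝ) (hf : MemLp f 2 μ') (hg : MemLp g 2 μ') :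
    Integrable (fun a => f a * g a) μ' := by
  have h := int_inner' f g hf hg
  simpa [RCLike.inner_apply, conj_trivial, mul_comm] using h

lemma coord_abs_le {d : ℕ} (v : EuclideanSpace ℝ (Fin d)) (i : Fin d) : |v i| ≤ ‖v‖ := by
  rw [EuclideanSpace.norm_eq]
  rw [← Real.sqrt_sq (abs_nonneg (v i))]
  apply Real.sqrt_le_sqrt
  rw [sq_abs]
  have := Finset.single_le_sum (f := fun j : Fin d => ‖v j‖ ^ 2) (fun j _ => sq_nonneg _)
    (Finset.mem_univ i)
  simpa [Real.norm_eq_abs, sq_abs] using this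

lemma memℒp_coord {d : ℕ} (f : α → EuclideanSpace ℝ (Fin d)) (hf : MemLp f 2 μ')
    (hfm : AEStronglyMeasurable f μ') (i : Fin d) :
    MemLp (fun a => f a i) 2 μ' := by
  refine MemLp.of_le (hf.norm) ?_ ?_
  · exact (EuclideanSpace.proj (𝕜 := ℝ) i).continuous.measurable.comp_aemeasurable hfm.aemeasurable |>.aestronglyMeasurable
  · filter_upwards with a
    simpa [Real.norm_eq_abs] using coord_abs_le (f a) i


end Helpers

section Cond
variable {d : ℕ}

local notation "m" => MeasurableSpace.comap (Prod.fst : (EuclideanSpace ℝ (Fin d)) × (EuclideanSpace ℝ (Fin d)) → EuclideanSpace ℝ (Fin d)) inferInstance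

lemma condexp_snd_memℒp (γ : Measure ((EuclideanSpace ℝ (Fin d)) × (EuclideanSpace ℝ (Fin d))))
    [IsProbabilityMeasure γ]
    (h2Y : MemLp (fun p : (EuclideanSpace ℝ (Fin d)) × (EuclideanSpace ℝ (Fin d)) => p.2) 2 γ)
    (Tγ : EuclideanSpace ℝ (Fin d) → EuclideanSpace ℝ (Fin d))
    (hTγ : (fun p : (EuclideanSpace ℝ (Fin d)) × (EuclideanSpace ℝ (Fin d)) => Tγ p.1) =ᵐ[γ]
      γ[(fun p : (EuclideanSpace ℝ (Fin d)) × (EuclideanSpace ℝ (Fin d)) => p.2) | m]) :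
    MemLp (fun p : (EuclideanSpace ℝ (Fin d)) × (EuclideanSpace ℝ (Fin d)) => Tγ p.1) 2 γ := by
  have hm : m ≤ (inferInstance : MeasurableSpace ((EuclideanSpace ℝ (Fin d)) × (EuclideanSpace ℝ (Fin d)))) :=
    measurable_fst.comap_le
  set f2 := h2Y.toLp _ with hf2
  have hce : (↑(condExpL2 (EuclideanSpace ℝ (Fin d)) ℝ hm f2) :
      (EuclideanSpace ℝ (Fin d)) × (EuclideanSpace ℝ (Fin d)) → EuclideanSpace ℝ (Fin d)) =ᵐ[γ]
      γ[(fun p : (EuclideanSpace ℝ (Fin d)) × (EuclideanSpace ℝ (Fin d)) => p.2) | m] := by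
    refine ae_eq_condExp_of_forall_setIntegral_eq hm (h2Y.integrable one_le_two)
      (fun s hs hμs => integrableOn_condExpL2_of_measure_ne_top hm hμs.ne f2)
      (fun s hs hμs => ?_) (aestronglyMeasurable_condExpL2 hm f2)
    rw [integral_condExpL2_eq hm f2 hs hμs.ne]
    exact setIntegral_congr_ae (hm s hs) ((h2Y.coeFn_toLp).mono fun p hp _ => hp)
  exact (Lp.memLp _).ae_eq (hce.trans hTγ.symm)

lemma cross_integral (γ : Measure ((EuclideanSpace ℝ (Fin d)) × (EuclideanSpace ℝ (Fin d))))
    [IsProbabilityMeasure γ]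
    (Tγ : EuclideanSpace ℝ (Fin d) → EuclideanSpace ℝ (Fin d)) (hTγm : Measurable Tγ)
    (hTγ : (fun p : (EuclideanSpace ℝ (Fin d)) × (EuclideanSpace ℝ (Fin d)) => Tγ p.1) =ᵐ[γ]
      γ[(fun p : (EuclideanSpace ℝ (Fin d)) × (EuclideanSpace ℝ (Fin d)) => p.2) | m])
    (h2Y : MemLp (fun p : (EuclideanSpace ℝ (Fin d)) × (EuclideanSpace ℝ (Fin d)) => p.2) 2 γ)
    (h2Tγ : MemLp (fun p : (EuclideanSpace ℝ (Fin d)) × (EuclideanSpace ℝ (Fin d)) => Tγ p.1) 2 γ)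
    (h : EuclideanSpace ℝ (Fin d) → EuclideanSpace ℝ (Fin d)) (hhm : Measurable h)
    (h2h : MemLp (fun p : (EuclideanSpace ℝ (Fin d)) × (EuclideanSpace ℝ (Fin d)) => h p.1) 2 γ) :
    ∫ p, ⟪h p.1, p.2⟫ ∂γ = ∫ p, ⟪h p.1, Tγ p.1⟫ ∂γ := by
  have hm : m ≤ (inferInstance : MeasurableSpace ((EuclideanSpace ℝ (Fin d)) × (EuclideanSpace ℝ (Fin d)))) :=
    measurable_fst.comap_le
  have hfstm : Measurable[m] (Prod.fst : (EuclideanSpace ℝ (Fin d)) × (EuclideanSpace ℝ (Fin d)) → EuclideanSpace ℝ (Fin d)) :=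
    fun t ht => ⟨t, ht, rfl⟩
  have hYmem : ∀ i : Fin d, MemLp (fun p : (EuclideanSpace ℝ (Fin d)) × (EuclideanSpace ℝ (Fin d)) => p.2 i) 2 γ :=
    fun i => memℒp_coord _ h2Y h2Y.aestronglyMeasurable i
  have hTγmem : ∀ i : Fin d, MemLp (fun p : (EuclideanSpace ℝ (Fin d)) × (EuclideanSpace ℝ (Fin d)) => Tγ p.1 i) 2 γ :=
    fun i => memℒp_coord _ h2Tγ h2Tγ.aestronglyMeasurable i
  have hhmem : ∀ i : Fin d, MemLp (fun p : (EuclideanSpace ℝ (Fin d)) × (EuclideanSpace ℝ (Fin d)) => h p.1 i) 2 γ :=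
    fun i => memℒp_coord _ h2h h2h.aestronglyMeasurable i
  have hco : ∀ i : Fin d, (fun p : (EuclideanSpace ℝ (Fin d)) × (EuclideanSpace ℝ (Fin d)) => Tγ p.1 i) =ᵐ[γ]
      γ[(fun p : (EuclideanSpace ℝ (Fin d)) × (EuclideanSpace ℝ (Fin d)) => p.2 i) | m] := by
    intro i
    have hYi : Integrable (fun p : (EuclideanSpace ℝ (Fin d)) × (EuclideanSpace ℝ (Fin d)) => p.2 i) γ :=
      (hYmem i).integrable one_le_two
    have hTγi : Integrable (fun p : (EuclideanSpace ℝ (Fin d)) × (EuclideanSpace ℝ (Fin d)) => Tγ p.1 i) γ :=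
      (hTγmem i).integrable one_le_two
    refine ae_eq_condExp_of_forall_setIntegral_eq hm hYi
      (fun s _ _ => hTγi.integrableOn) (fun s hs hμs => ?_) ?_
    · have hv : ∫ p in s, (fun p : (EuclideanSpace ℝ (Fin d)) × (EuclideanSpace ℝ (Fin d)) => Tγ p.1) p ∂γ
          = ∫ p in s, p.2 ∂γ := by
        rw [setIntegral_congr_ae (hm s hs) (hTγ.mono fun p hp _ => hp)]
        exact setIntegral_condExp hm (h2Y.integrable one_le_two) hs
      have hTon : IntegrableOn (fun p : (EuclideanSpace ℝ (Fin d)) × (EuclideanSpace ℝ (Fin d)) => Tγ p.1) s γ :=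
        (h2Tγ.integrable one_le_two).integrableOn
      have hYon : IntegrableOn (fun p : (EuclideanSpace ℝ (Fin d)) × (EuclideanSpace ℝ (Fin d)) => p.2) s γ :=
        (h2Y.integrable one_le_two).integrableOn
      have h1 := ContinuousLinearMap.integral_comp_comm (EuclideanSpace.proj (𝕜 := ℝ) i) hTon
      have h2 := ContinuousLinearMap.integral_comp_comm (EuclideanSpace.proj (𝕜 := ℝ) i) hYon
      simp only [PiLp.proj_apply] at h1 h2
      rw [h1, h2]
      exact congrArg (fun v : EuclideanSpace ℝ (Fin d) => v i) hv
    · exact ((((EuclideanSpace.proj (𝕜 := ℝ) i).continuous.measurable.comp hTγm).comp hfstm).stronglyMeasurable).aestronglyMeasurable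
  have hprod : ∀ i : Fin d,
      ∫ p, (h p.1 i) * (p.2 i) ∂γ = ∫ p, (h p.1 i) * (Tγ p.1 i) ∂γ := by
    intro i
    have hfm' : StronglyMeasurable[m] (fun p : (EuclideanSpace ℝ (Fin d)) × (EuclideanSpace ℝ (Fin d)) => h p.1 i) :=
      (((EuclideanSpace.proj (𝕜 := ℝ) i).continuous.measurable.comp hhm).comp hfstm).stronglyMeasurable
    have hfg_int : Integrable ((fun p : (EuclideanSpace ℝ (Fin d)) × (EuclideanSpace ℝ (Fin d)) => h p.1 i)
        * (fun p => p.2 i)) γ := int_mul _ _ (hhmem i) (hYmem i)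
    have hpull := condExp_mul_of_stronglyMeasurable_left hfm' hfg_int ((hYmem i).integrable one_le_two)
    calc ∫ p, h p.1 i * p.2 i ∂γ
        = ∫ p, (γ[(fun p : (EuclideanSpace ℝ (Fin d)) × (EuclideanSpace ℝ (Fin d)) => h p.1 i)
            * (fun p => p.2 i) | m]) p ∂γ := (integral_condExp hm).symm
      _ = ∫ p, h p.1 i * (γ[(fun p : (EuclideanSpace ℝ (Fin d)) × (EuclideanSpace ℝ (Fin d)) => p.2 i) | m]) p ∂γ := by
          refine integral_congr_ae (hpull.mono fun p hp => ?_)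
          simpa using hp
      _ = ∫ p, h p.1 i * Tγ p.1 i ∂γ := by
          refine integral_congr_ae ?_
          filter_upwards [hco i] with p hp
          rw [← hp]
  have e1 : ∫ p, ⟪h p.1, p.2⟫ ∂γ = ∑ i : Fin d, ∫ p, (h p.1 i) * (p.2 i) ∂γ := by
    rw [← integral_finset_sum _ (fun i _ => int_mul _ _ (hhmem i) (hYmem i))]
    refine integral_congr_ae (Filter.Eventually.of_forall fun p => ?_)
    simp [PiLp.inner_apply, RCLike.inner_apply, conj_trivial, mul_comm]
  have e2 : ∫ p, ⟪h p.1, Tγ p.1⟫ ∂γ = ∑ i : Fin d, ∫ p, (h p.1 i) * (Tγ p.1 i) ∂γ := by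
    rw [← integral_finset_sum _ (fun i _ => int_mul _ _ (hhmem i) (hTγmem i))]
    refine integral_congr_ae (Filter.Eventually.of_forall fun p => ?_)
    simp [PiLp.inner_apply, RCLike.inner_apply, conj_trivial, mul_comm]
  rw [e1, e2]
  exact Finset.sum_congr rfl fun i _ => hprod i

end Cond


set_option maxHeartbeats 1000000

/-- Stability estimate: if the Brenier map `T₀` from `μ` to `ν` is `L`-Lipschitz, then for
any optimal coupling `γ` between `μ̃` and `ν̃`, with barycentric projection `Tγ` and
`ν̄ = T₀ # μ̃`,
`(1/2L)∫‖Tγ − T₀‖² dμ̃ ≤ ½(W₂²(μ̃,ν̃) − W₂²(μ̃,ν̄)) + ∫(φ₀* − ½‖·‖²) d(ν̃ − ν̄)`. -/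
theorem stmt7 {d : ℕ} (L : ℝ) (hL : 0 < L)
    (μ ν : Measure (EuclideanSpace ℝ (Fin d)))
    [IsProbabilityMeasure μ] [IsProbabilityMeasure ν]
    (hμac : μ ≪ volume) (hνac : ν ≪ volume)
    (h2μ : MemLp (id : EuclideanSpace ℝ (Fin d) → EuclideanSpace ℝ (Fin d)) 2 μ)
    (h2ν : MemLp (id : EuclideanSpace ℝ (Fin d) → EuclideanSpace ℝ (Fin d)) 2 ν)
    (μt νt : Measure (EuclideanSpace ℝ (Fin d)))
    [IsProbabilityMeasure μt] [IsProbabilityMeasure νt]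
    (h2μt : MemLp (id : EuclideanSpace ℝ (Fin d) → EuclideanSpace ℝ (Fin d)) 2 μt)
    (h2νt : MemLp (id : EuclideanSpace ℝ (Fin d) → EuclideanSpace ℝ (Fin d)) 2 νt)
    (φ₀ : EuclideanSpace ℝ (Fin d) → ℝ)
    (hφ₀ : ConvexOn ℝ Set.univ φ₀) (hdiff : Differentiable ℝ φ₀)
    (T₀ : EuclideanSpace ℝ (Fin d) → EuclideanSpace ℝ (Fin d))
    (hT₀ : T₀ = gradient φ₀) (hT₀m : Measurable T₀)
    (hpush : μ.map T₀ = ν)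
    (hLip : ∀ x y, ‖T₀ x - T₀ y‖ ≤ L * ‖x - y‖)
    (φstar : EuclideanSpace ℝ (Fin d) → ℝ)
    (hstar : ∀ y, IsLUB {c : ℝ | ∃ x, c = ⟪x, y⟫ - φ₀ x} (φstar y))
    (hint1 : Integrable φstar νt) (hint2 : Integrable φstar (μt.map T₀))
    (γ : Measure (EuclideanSpace ℝ (Fin d) × EuclideanSpace ℝ (Fin d)))
    [IsProbabilityMeasure γ]
    (hγ1 : γ.map Prod.fst = μt) (hγ2 : γ.map Prod.snd = νt)
    (hγopt : ∫ p, ‖p.1 - p.2‖ ^ 2 ∂γ = W2sq μt νt)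
    (Tγ : EuclideanSpace ℝ (Fin d) → EuclideanSpace ℝ (Fin d)) (hTγm : Measurable Tγ)
    (hTγ : (fun p => Tγ p.1) =ᵐ[γ]
      γ[(fun p => p.2) | MeasurableSpace.comap Prod.fst inferInstance]) :
    (1 / (2 * L)) * ∫ x, ‖Tγ x - T₀ x‖ ^ 2 ∂μt ≤
      (1 / 2) * (W2sq μt νt - W2sq μt (μt.map T₀))
      + ((∫ y, (φstar y - (1 / 2) * ‖y‖ ^ 2) ∂νt)
          - ∫ y, (φstar y - (1 / 2) * ‖y‖ ^ 2) ∂(μt.map T₀)) := by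
  -- ## MemLp facts on γ
  have h2X : MemLp (fun p : (EuclideanSpace ℝ (Fin d)) × (EuclideanSpace ℝ (Fin d)) => p.1) 2 γ := by
    rw [← hγ1] at h2μt
    simpa [Function.id_comp] using
      (memLp_map_measure_iff measurable_id.aestronglyMeasurable
        measurable_fst.aemeasurable).1 h2μt
  have h2Y : MemLp (fun p : (EuclideanSpace ℝ (Fin d)) × (EuclideanSpace ℝ (Fin d)) => p.2) 2 γ := by
    rw [← hγ2] at h2νt
    simpa [Function.id_comp] using
      (memLp_map_measure_iff measurable_id.aestronglyMeasurable
        measurable_snd.aemeasurable).1 h2νt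
  have h2T₀X : MemLp (fun p : (EuclideanSpace ℝ (Fin d)) × (EuclideanSpace ℝ (Fin d)) => T₀ p.1) 2 γ := by
    refine MemLp.of_le ((memLp_const (‖T₀ 0‖)).add ((h2X.norm).const_mul L)) ?_ ?_
    · exact (hT₀m.comp measurable_fst).aestronglyMeasurable
    · filter_upwards with p
      have h1 : ‖T₀ p.1 - T₀ 0‖ ≤ L * ‖p.1 - 0‖ := hLip p.1 0
      have h2 : ‖T₀ p.1‖ ≤ ‖T₀ 0‖ + L * ‖p.1‖ := by
        have := norm_sub_norm_le (T₀ p.1) (T₀ 0)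
        simp only [sub_zero] at h1
        linarith
      exact h2.trans (le_abs_self _)
  have h2TγX : MemLp (fun p : (EuclideanSpace ℝ (Fin d)) × (EuclideanSpace ℝ (Fin d)) => Tγ p.1) 2 γ :=
    condexp_snd_memℒp γ h2Y Tγ hTγ
  -- ## basic integrabilities
  have iX2 := int_sq _ h2X
  have iY2 := int_sq _ h2Y
  have iT2 := int_sq _ h2T₀X
  have iG2 := int_sq _ h2TγX
  have iXY := int_inner' _ _ h2X h2Y
  have iXT := int_inner' _ _ h2X h2T₀X
  have iA := int_sq _ (h2Y.sub h2T₀X)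
  have iB := int_sq _ (h2TγX.sub h2T₀X)
  have hT₀fstm : Measurable (fun p : (EuclideanSpace ℝ (Fin d)) × (EuclideanSpace ℝ (Fin d)) => T₀ p.1) :=
    hT₀m.comp measurable_fst
  have hmapT : μt.map T₀ = γ.map (fun p : (EuclideanSpace ℝ (Fin d)) × (EuclideanSpace ℝ (Fin d)) => T₀ p.1) := by
    rw [← hγ1, Measure.map_map hT₀m measurable_fst]
    rfl
  have iφY : Integrable (fun p : (EuclideanSpace ℝ (Fin d)) × (EuclideanSpace ℝ (Fin d)) => φstar p.2) γ := by
    rw [← hγ2] at hint1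
    exact (integrable_map_measure hint1.1 measurable_snd.aemeasurable).1 hint1
  have iφT : Integrable (fun p : (EuclideanSpace ℝ (Fin d)) × (EuclideanSpace ℝ (Fin d)) => φstar (T₀ p.1)) γ := by
    rw [hmapT] at hint2
    exact (integrable_map_measure hint2.1 hT₀fstm.aemeasurable).1 hint2
  -- ## key pointwise inequality integrated
  have hkey : 1/(2*L) * ∫ p, ‖p.2 - T₀ p.1‖^2 ∂γ ≤
      (∫ p, φstar p.2 ∂γ) - (∫ p, φstar (T₀ p.1) ∂γ)
        - (∫ p, ⟪p.1, p.2⟫ ∂γ) + ∫ p, ⟪p.1, T₀ p.1⟫ ∂γ := by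
    have eR : ∫ p, (φstar p.2 - φstar (T₀ p.1) - ⟪p.1, p.2⟫ + ⟪p.1, T₀ p.1⟫) ∂γ
        = (∫ p, φstar p.2 ∂γ) - (∫ p, φstar (T₀ p.1) ∂γ)
          - (∫ p, ⟪p.1, p.2⟫ ∂γ) + ∫ p, ⟪p.1, T₀ p.1⟫ ∂γ := by
      have i1 : Integrable (fun p : (EuclideanSpace ℝ (Fin d)) × (EuclideanSpace ℝ (Fin d)) =>
          φstar p.2 - φstar (T₀ p.1)) γ := by exact iφY.sub iφT
      have i2 : Integrable (fun p : (EuclideanSpace ℝ (Fin d)) × (EuclideanSpace ℝ (Fin d)) =>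
          φstar p.2 - φstar (T₀ p.1) - ⟪p.1, p.2⟫) γ := by exact i1.sub iXY
      rw [integral_add i2 iXT, integral_sub i1 iXY, integral_sub iφY iφT]
    rw [← integral_const_mul, ← eR]
    refine integral_mono (iA.const_mul _) ((((iφY.sub iφT).sub iXY).add iXT)) (fun p => ?_)
    have := key_ptwise φ₀ hφ₀ hdiff L hL (by rw [← hT₀]; exact hLip) φstar hstar p.1 p.2
    rw [← hT₀] at this
    exact this
  -- ## marginal transfers
  have hcont : Continuous (fun y : EuclideanSpace ℝ (Fin d) => ‖y‖^2) := continuous_norm.pow 2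
  have hcontC : Continuous (fun q : (EuclideanSpace ℝ (Fin d)) × (EuclideanSpace ℝ (Fin d)) => ‖q.1 - q.2‖^2) := ((continuous_fst.sub continuous_snd).norm.pow 2)
  have eI1 : ∫ p, φstar p.2 ∂γ = ∫ y, φstar y ∂νt := by
    rw [← hγ2]
    exact (integral_map measurable_snd.aemeasurable (by rw [hγ2]; exact hint1.1)).symm
  have eI2 : ∫ p, φstar (T₀ p.1) ∂γ = ∫ y, φstar y ∂(μt.map T₀) := by
    rw [hmapT]
    exact (integral_map hT₀fstm.aemeasurable
      (by rw [← hmapT]; exact hint2.1)).symm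
  have eN2a : ∫ p, ‖p.2‖^2 ∂γ = ∫ y, ‖y‖^2 ∂νt := by
    rw [← hγ2]
    exact (integral_map measurable_snd.aemeasurable hcont.aestronglyMeasurable).symm
  have eN2b : ∫ p, ‖T₀ p.1‖^2 ∂γ = ∫ y, ‖y‖^2 ∂(μt.map T₀) := by
    rw [hmapT]
    exact (integral_map hT₀fstm.aemeasurable
      hcont.aestronglyMeasurable).symm
  have eL : ∫ x, ‖Tγ x - T₀ x‖^2 ∂μt = ∫ p, ‖Tγ p.1 - T₀ p.1‖^2 ∂γ := by
    rw [← hγ1]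
    exact integral_map measurable_fst.aemeasurable
      (((hTγm.sub hT₀m).norm.pow_const 2).aestronglyMeasurable)
  have intν2 : Integrable (fun y => ‖y‖^2) νt := by
    rw [← hγ2]
    exact (integrable_map_measure hcont.aestronglyMeasurable
      measurable_snd.aemeasurable).2 (by exact iY2)
  have intb2 : Integrable (fun y => ‖y‖^2) (μt.map T₀) := by
    rw [hmapT]
    exact (integrable_map_measure hcont.aestronglyMeasurable
      hT₀fstm.aemeasurable).2 (by exact iT2)
  have eN1 : ∫ y, (φstar y - (1/2) * ‖y‖^2) ∂νt
      = (∫ y, φstar y ∂νt) - (1/2) * ∫ y, ‖y‖^2 ∂νt := by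
    rw [integral_sub hint1 (by exact intν2.const_mul (1/2)), integral_const_mul]
  have eN2 : ∫ y, (φstar y - (1/2) * ‖y‖^2) ∂(μt.map T₀)
      = (∫ y, φstar y ∂(μt.map T₀)) - (1/2) * ∫ y, ‖y‖^2 ∂(μt.map T₀) := by
    rw [integral_sub hint2 (by exact intb2.const_mul (1/2)), integral_const_mul]
  -- ## cost expansions
  have iTY := int_inner' _ _ h2T₀X h2Y
  have iTG := int_inner' _ _ h2T₀X h2TγX
  have iGY := int_inner' _ _ h2TγX h2Y
  have iE := int_sq _ (h2Y.sub h2TγX)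
  have expand : ∀ (f g : (EuclideanSpace ℝ (Fin d)) × (EuclideanSpace ℝ (Fin d)) → EuclideanSpace ℝ (Fin d)),
      Integrable (fun p => ‖f p‖^2) γ → Integrable (fun p => ‖g p‖^2) γ →
      Integrable (fun p => ⟪f p, g p⟫) γ →
      ∫ p, ‖f p - g p‖^2 ∂γ
        = (∫ p, ‖f p‖^2 ∂γ) + (∫ p, ‖g p‖^2 ∂γ) - 2 * ∫ p, ⟪f p, g p⟫ ∂γ := by
    intro f g hf hg hfg
    have hpt : ∀ p, ‖f p - g p‖^2 = ‖f p‖^2 + ‖g p‖^2 - 2*⟪f p, g p⟫ := fun p => by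
      rw [@norm_sub_sq_real]; ring
    calc ∫ p, ‖f p - g p‖^2 ∂γ = ∫ p, (‖f p‖^2 + ‖g p‖^2 - 2*⟪f p, g p⟫) ∂γ :=
          integral_congr_ae (Filter.Eventually.of_forall hpt)
      _ = _ := by
          rw [integral_sub (by exact hf.add hg) (by exact hfg.const_mul 2),
            integral_add hf hg, integral_const_mul]
  have eC := expand _ _ iX2 iY2 iXY
  have eD := expand _ _ iX2 iT2 iXT
  have eA : ∫ p, ‖p.2 - T₀ p.1‖^2 ∂γ
      = (∫ p, ‖p.2‖^2 ∂γ) + (∫ p, ‖T₀ p.1‖^2 ∂γ) - 2 * ∫ p, ⟪T₀ p.1, p.2⟫ ∂γ := by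
    have := expand _ _ iY2 iT2 (by
      have := int_inner' _ _ h2Y h2T₀X
      exact this)
    rw [this]
    have : ∫ p, ⟪(fun p : (EuclideanSpace ℝ (Fin d)) × (EuclideanSpace ℝ (Fin d)) => p.2) p,
        T₀ p.1⟫ ∂γ = ∫ p, ⟪T₀ p.1, p.2⟫ ∂γ :=
      integral_congr_ae (Filter.Eventually.of_forall fun p => real_inner_comm _ _)
    rw [this]
  have eB : ∫ p, ‖Tγ p.1 - T₀ p.1‖^2 ∂γ
      = (∫ p, ‖Tγ p.1‖^2 ∂γ) + (∫ p, ‖T₀ p.1‖^2 ∂γ) - 2 * ∫ p, ⟪T₀ p.1, Tγ p.1⟫ ∂γ := by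
    have := expand _ _ iG2 iT2 (by
      have := int_inner' _ _ h2TγX h2T₀X
      exact this)
    rw [this]
    have : ∫ p, ⟪(fun p : (EuclideanSpace ℝ (Fin d)) × (EuclideanSpace ℝ (Fin d)) => Tγ p.1) p,
        T₀ p.1⟫ ∂γ = ∫ p, ⟪T₀ p.1, Tγ p.1⟫ ∂γ :=
      integral_congr_ae (Filter.Eventually.of_forall fun p => real_inner_comm _ _)
    rw [this]
  have eE : ∫ p, ‖p.2 - Tγ p.1‖^2 ∂γ
      = (∫ p, ‖p.2‖^2 ∂γ) + (∫ p, ‖Tγ p.1‖^2 ∂γ) - 2 * ∫ p, ⟪Tγ p.1, p.2⟫ ∂γ := by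
    have := expand _ _ iY2 iG2 (by
      have := int_inner' _ _ h2Y h2TγX
      exact this)
    rw [this]
    have : ∫ p, ⟪(fun p : (EuclideanSpace ℝ (Fin d)) × (EuclideanSpace ℝ (Fin d)) => p.2) p,
        Tγ p.1⟫ ∂γ = ∫ p, ⟪Tγ p.1, p.2⟫ ∂γ :=
      integral_congr_ae (Filter.Eventually.of_forall fun p => real_inner_comm _ _)
    rw [this]
  -- ## conditional expectation cross terms
  have hcr1 : ∫ p, ⟪T₀ p.1, p.2⟫ ∂γ = ∫ p, ⟪T₀ p.1, Tγ p.1⟫ ∂γ :=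
    cross_integral γ Tγ hTγm hTγ h2Y h2TγX T₀ hT₀m h2T₀X
  have hcr2 : ∫ p, ⟪Tγ p.1, p.2⟫ ∂γ = ∫ p, ‖Tγ p.1‖^2 ∂γ := by
    rw [cross_integral γ Tγ hTγm hTγ h2Y h2TγX Tγ hTγm h2TγX]
    exact integral_congr_ae (Filter.Eventually.of_forall fun p =>
      real_inner_self_eq_norm_sq _)
  have hEpos : 0 ≤ ∫ p, ‖p.2 - Tγ p.1‖^2 ∂γ := integral_nonneg fun p => sq_nonneg _
  have hAB : ∫ p, ‖Tγ p.1 - T₀ p.1‖^2 ∂γ ≤ ∫ p, ‖p.2 - T₀ p.1‖^2 ∂γ := by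
    linarith [eA, eB, eE, hcr1, hcr2, hEpos]
  -- ## W2 upper bound via the coupling (id, T₀)
  have hW2b : W2sq μt (μt.map T₀) ≤ ∫ p, ‖p.1 - T₀ p.1‖^2 ∂γ := by
    have hg : Measurable (fun p : (EuclideanSpace ℝ (Fin d)) × (EuclideanSpace ℝ (Fin d)) =>
        (p.1, T₀ p.1)) := measurable_fst.prodMk hT₀fstm
    apply csInf_le
    · refine ⟨0, ?_⟩
      rintro c ⟨π, -, -, rfl⟩
      exact integral_nonneg fun p => sq_nonneg _
    · refine ⟨γ.map (fun p => (p.1, T₀ p.1)), ?_, ?_, ?_⟩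
      · rw [Measure.map_map measurable_fst hg]
        exact hγ1
      · rw [Measure.map_map measurable_snd hg]
        exact hmapT.symm
      · exact (integral_map hg.aemeasurable hcontC.aestronglyMeasurable).symm
  -- ## final assembly
  have hmul : 1/(2*L) * ∫ p, ‖Tγ p.1 - T₀ p.1‖^2 ∂γ
      ≤ 1/(2*L) * ∫ p, ‖p.2 - T₀ p.1‖^2 ∂γ :=
    mul_le_mul_of_nonneg_left hAB (by positivity)
  rw [eL, eN1, eN2]
  linarith [hkey, hmul, hW2b, eC, eD, eI1, eI2, eN2a, eN2b, hγopt]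
end

section
/- Let K : ℝ → ℝ be defined by K(u) = Σ_{m=0}^{2s+2} ψ_m(0) ψ_m(u) exp(−u²/2), where ψ_m is the m-th (orthonormal) Hermite function/polynomial. Then K is a symmetric, bounded kernel of order 2s+2: ∫ u^j K(u) du = 1 for j = 0 and 0 for j = 1, …, 2s+1, and ∫ |u|^{2s+2}|K(u)| du < ∞. -/
open MeasureTheory

private lemma hmom15 (N : ℕ) : Integrable fun u : ℝ => |u| ^ N * Real.exp (-u ^ 2 / 2) := by
  have h := (integrable_rpow_mul_exp_neg_mul_sq (b := 1/2) (by norm_num)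
      (s := (N : ℝ)) (by exact_mod_cast neg_one_lt_zero.trans_le (Nat.cast_nonneg N))).abs
  refine h.congr (Filter.Eventually.of_forall fun x => ?_)
  simp only [Real.rpow_natCast, abs_mul, abs_pow, Real.abs_exp]
  ring_nf

private lemma poly_abs_le15 (q : Polynomial ℝ) (u : ℝ) :
    |q.eval u| ≤ ∑ k ∈ Finset.range (q.natDegree + 1), |q.coeff k| * |u| ^ k := by
  conv_lhs => rw [Polynomial.eval_eq_sum_range]
  refine (Finset.abs_sum_le_sum_abs _ _).trans ?_
  refine Finset.sum_le_sum fun k _ => ?_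
  rw [abs_mul, abs_pow]

private lemma pow_gauss_le15 (k : ℕ) (u : ℝ) :
    |u| ^ k * Real.exp (-u ^ 2 / 2) ≤ k.factorial * Real.exp (1/2) := by
  have h1 : |u| ^ k ≤ k.factorial * Real.exp |u| := by
    have h := Real.pow_div_factorial_le_exp (x := |u|) (abs_nonneg u) k
    rw [div_le_iff₀ (by positivity)] at h
    calc |u| ^ k ≤ Real.exp |u| * k.factorial := h
      _ = k.factorial * Real.exp |u| := mul_comm _ _
  calc |u| ^ k * Real.exp (-u ^ 2 / 2)
      ≤ (k.factorial * Real.exp |u|) * Real.exp (-u ^ 2 / 2) :=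
        mul_le_mul_of_nonneg_right h1 (Real.exp_pos _).le
    _ = k.factorial * Real.exp (|u| + -u ^ 2 / 2) := by rw [Real.exp_add]; ring
    _ ≤ k.factorial * Real.exp (1/2) := by
        refine mul_le_mul_of_nonneg_left (Real.exp_le_exp.mpr ?_) (by positivity)
        nlinarith [sq_abs u, sq_nonneg (|u| - 1)]

private lemma int_pow_poly15 (N : ℕ) (p : Polynomial ℝ) :
    Integrable fun u : ℝ => |u| ^ N * (|p.eval u| * Real.exp (-u ^ 2 / 2)) := by
  refine Integrable.mono'
    (g := fun u => ∑ k ∈ Finset.range (p.natDegree + 1),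
      |p.coeff k| * (|u| ^ (N + k) * Real.exp (-u ^ 2 / 2)))
    (integrable_finset_sum _ fun k _ => (hmom15 (N + k)).const_mul _) ?_ ?_
  · apply Continuous.aestronglyMeasurable
    exact (continuous_abs.pow N).mul ((p.continuous.abs).mul
      (Real.continuous_exp.comp (by fun_prop)))
  · refine Filter.Eventually.of_forall fun u => ?_
    rw [Real.norm_eq_abs, abs_of_nonneg (by positivity)]
    calc |u| ^ N * (|p.eval u| * Real.exp (-u ^ 2 / 2))
        ≤ |u| ^ N * ((∑ k ∈ Finset.range (p.natDegree + 1), |p.coeff k| * |u| ^ k)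
            * Real.exp (-u ^ 2 / 2)) := by
          gcongr
          exact poly_abs_le15 p u
      _ = ∑ k ∈ Finset.range (p.natDegree + 1),
            |p.coeff k| * (|u| ^ (N + k) * Real.exp (-u ^ 2 / 2)) := by
          rw [Finset.sum_mul, Finset.mul_sum]
          exact Finset.sum_congr rfl fun k _ => by rw [pow_add]; ring

private lemma span_lemma15 (ψ : ℕ → ℝ → ℝ)
    (hpoly : ∀ m, ∃ p : Polynomial ℝ, p.natDegree = m ∧ ∀ u, ψ m u = p.eval u)
    (h00 : (∫ u : ℝ, ψ 0 u * ψ 0 u * Real.exp (-u ^ 2 / 2)) = 1) :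
    ∀ (n : ℕ) (p : Polynomial ℝ), p.natDegree ≤ n →
      ∃ c : ℕ → ℝ, ∀ u, p.eval u = ∑ j ∈ Finset.range (n + 1), c j * ψ j u := by
  have hψ0 : ∃ a : ℝ, a ≠ 0 ∧ ∀ u, ψ 0 u = a := by
    obtain ⟨p0, hd, he⟩ := hpoly 0
    obtain ⟨a, ha⟩ := Polynomial.natDegree_eq_zero.mp hd
    refine ⟨a, ?_, fun u => by rw [he, ← ha, Polynomial.eval_C]⟩
    rintro rfl
    have : ∀ u : ℝ, ψ 0 u = 0 := fun u => by rw [he, ← ha]; simp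
    rw [show (fun u : ℝ => ψ 0 u * ψ 0 u * Real.exp (-u ^ 2 / 2)) = fun _ => (0:ℝ)
      from funext fun u => by rw [this u]; ring] at h00
    simp at h00
  intro n
  induction n with
  | zero =>
    intro p hp
    obtain ⟨a, ha, hψa⟩ := hψ0
    obtain ⟨b, hb⟩ := Polynomial.natDegree_eq_zero.mp (Nat.le_zero.mp hp)
    exact ⟨fun _ => b / a, fun u => by
      rw [← hb]; simp [hψa, div_mul_cancel₀ _ ha]⟩
  | succ n ih =>
    intro p hp
    obtain ⟨pm, hdm, hem⟩ := hpoly (n + 1)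
    have hpmne : pm ≠ 0 := fun h => by simp [h] at hdm
    have hpm0 : pm.coeff (n + 1) ≠ 0 := by
      rw [← hdm, Polynomial.coeff_natDegree]
      exact Polynomial.leadingCoeff_ne_zero.mpr hpmne
    set r := p.coeff (n + 1) / pm.coeff (n + 1) with hr
    have hq : (p - Polynomial.C r * pm).natDegree ≤ n := by
      rw [Polynomial.natDegree_le_iff_coeff_eq_zero]
      intro N hN
      rcases Nat.lt_or_ge (n + 1) N with h | h
      · rw [Polynomial.coeff_sub, Polynomial.coeff_C_mul,
          Polynomial.coeff_eq_zero_of_natDegree_lt (lt_of_le_of_lt hp h),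
          Polynomial.coeff_eq_zero_of_natDegree_lt (by omega : pm.natDegree < N)]
        ring
      · have hN1 : N = n + 1 := by omega
        subst hN1
        rw [Polynomial.coeff_sub, Polynomial.coeff_C_mul, hr,
          div_mul_cancel₀ _ hpm0, sub_self]
    obtain ⟨c, hc⟩ := ih _ hq
    refine ⟨fun j => if j = n + 1 then r else c j, fun u => ?_⟩
    have key : ∑ j ∈ Finset.range (n + 2), (if j = n + 1 then r else c j) * ψ j u
        = (∑ j ∈ Finset.range (n + 1), c j * ψ j u) + r * ψ (n + 1) u := by
      rw [Finset.sum_range_succ]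
      congr 1
      · exact Finset.sum_congr rfl fun j hj => by
          rw [if_neg (by have := Finset.mem_range.mp hj; omega)]
      · rw [if_pos rfl]
    show Polynomial.eval u p
      = ∑ j ∈ Finset.range (n + 2), (if j = n + 1 then r else c j) * ψ j u
    rw [key]
    have h2 := hc u
    simp only [Polynomial.eval_sub, Polynomial.eval_mul, Polynomial.eval_C] at h2
    rw [hem]
    linarith [h2]

private lemma comb_integrable15 (ψ : ℕ → ℝ → ℝ)
    (horthint : ∀ m j, Integrable (fun u : ℝ => ψ m u * ψ j u * Real.exp (-u ^ 2 / 2)))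
    (N : ℕ) (c : ℕ → ℝ) (m : ℕ) :
    Integrable fun u : ℝ =>
      (∑ j ∈ Finset.range N, c j * ψ j u) * ψ m u * Real.exp (-u ^ 2 / 2) := by
  have heq : (fun u : ℝ => (∑ j ∈ Finset.range N, c j * ψ j u) * ψ m u * Real.exp (-u ^ 2 / 2))
      = fun u => ∑ j ∈ Finset.range N, c j * (ψ j u * ψ m u * Real.exp (-u ^ 2 / 2)) := by
    funext u
    rw [Finset.sum_mul, Finset.sum_mul]
    exact Finset.sum_congr rfl fun j _ => by ring
  rw [heq]
  exact integrable_finset_sum _ fun j _ => (horthint j m).const_mul _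

private lemma int_comb15 (ψ : ℕ → ℝ → ℝ)
    (horthint : ∀ m j, Integrable (fun u : ℝ => ψ m u * ψ j u * Real.exp (-u ^ 2 / 2)))
    (horth : ∀ m j, ∫ u : ℝ, ψ m u * ψ j u * Real.exp (-u ^ 2 / 2) = if m = j then 1 else 0)
    (N : ℕ) (c : ℕ → ℝ) (m : ℕ) :
    (∫ u : ℝ, (∑ j ∈ Finset.range N, c j * ψ j u) * ψ m u * Real.exp (-u ^ 2 / 2))
      = if m < N then c m else 0 := by
  have heq : (fun u : ℝ => (∑ j ∈ Finset.range N, c j * ψ j u) * ψ m u * Real.exp (-u ^ 2 / 2))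
      = fun u => ∑ j ∈ Finset.range N, c j * (ψ j u * ψ m u * Real.exp (-u ^ 2 / 2)) := by
    funext u
    rw [Finset.sum_mul, Finset.sum_mul]
    exact Finset.sum_congr rfl fun j _ => by ring
  rw [heq, integral_finset_sum _ fun j _ => (horthint j m).const_mul _]
  rw [Finset.sum_congr rfl fun j _ => by rw [integral_const_mul, horth j m]]
  simp [mul_ite, Finset.sum_ite_eq' (Finset.range N) m c, Finset.mem_range]

private lemma parity15 (ψ : ℕ → ℝ → ℝ)
    (hpoly : ∀ m, ∃ p : Polynomial ℝ, p.natDegree = m ∧ ∀ u, ψ m u = p.eval u)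
    (horthint : ∀ m j, Integrable (fun u : ℝ => ψ m u * ψ j u * Real.exp (-u ^ 2 / 2)))
    (horth : ∀ m j, ∫ u : ℝ, ψ m u * ψ j u * Real.exp (-u ^ 2 / 2) = if m = j then 1 else 0) :
    ∀ m u, ψ m (-u) = (-1 : ℝ) ^ m * ψ m u := by
  have h00 : (∫ u : ℝ, ψ 0 u * ψ 0 u * Real.exp (-u ^ 2 / 2)) = 1 := by
    simpa using horth 0 0
  have hspan := span_lemma15 ψ hpoly h00
  intro m
  induction m using Nat.strong_induction_on with
  | _ m ih =>
    obtain ⟨p, hd, he⟩ := hpoly m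
    rcases Nat.eq_zero_or_pos m with rfl | hm
    · obtain ⟨a, ha⟩ := Polynomial.natDegree_eq_zero.mp hd
      intro u
      simp [he, ← ha]
    · set q := p.comp (-Polynomial.X) - Polynomial.C ((-1 : ℝ) ^ m) * p with hqdef
      have hpne : p ≠ 0 := fun h => by rw [h] at hd; simp at hd; omega
      have hqe : ∀ u, q.eval u = ψ m (-u) - (-1 : ℝ) ^ m * ψ m u := by
        intro u
        simp [hqdef, Polynomial.eval_comp, he]
      have hcomp_deg : (p.comp (-Polynomial.X)).natDegree = m := by
        rw [Polynomial.natDegree_comp]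
        simp [hd]
      have hqd : q.natDegree ≤ m - 1 := by
        rw [Polynomial.natDegree_le_iff_coeff_eq_zero]
        intro N hN
        have hN' : m ≤ N := by omega
        rcases eq_or_lt_of_le hN' with heq | hlt
        · subst heq
          have h1 : (p.comp (-Polynomial.X)).coeff m = (-1 : ℝ) ^ m * p.coeff m := by
            conv_lhs => rw [← hcomp_deg]
            rw [Polynomial.coeff_natDegree, Polynomial.leadingCoeff_comp (by simp)]
            simp [hd, Polynomial.leadingCoeff, mul_comm]
          rw [hqdef, Polynomial.coeff_sub, Polynomial.coeff_C_mul, h1, sub_self]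
        · rw [hqdef, Polynomial.coeff_sub, Polynomial.coeff_C_mul,
            Polynomial.coeff_eq_zero_of_natDegree_lt (by omega : (p.comp (-Polynomial.X)).natDegree < N),
            Polynomial.coeff_eq_zero_of_natDegree_lt (by omega : p.natDegree < N)]
          ring
      obtain ⟨c, hc⟩ := hspan (m - 1) q hqd
      rw [show m - 1 + 1 = m from by omega] at hc
      have hzero : ∀ k, k < m → c k = 0 := by
        intro k hk
        have h1 : (∫ u : ℝ, q.eval u * ψ k u * Real.exp (-u ^ 2 / 2)) = c k := by
          rw [show (fun u : ℝ => q.eval u * ψ k u * Real.exp (-u ^ 2 / 2))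
              = fun u => (∑ j ∈ Finset.range m, c j * ψ j u) * ψ k u * Real.exp (-u ^ 2 / 2)
            from funext fun u => by rw [hc u]]
          rw [int_comb15 ψ horthint horth m c k, if_pos hk]
        -- now compute the same integral directly
        have hIh : Integrable (fun u : ℝ => ψ m u * ψ k (-u) * Real.exp (-u ^ 2 / 2)) := by
          rw [show (fun u : ℝ => ψ m u * ψ k (-u) * Real.exp (-u ^ 2 / 2))
              = fun u => (-1 : ℝ) ^ k * (ψ m u * ψ k u * Real.exp (-u ^ 2 / 2))
            from funext fun u => by rw [ih k hk u]; ring]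
          exact (horthint m k).const_mul _
        have hA : Integrable (fun u : ℝ => ψ m (-u) * ψ k u * Real.exp (-u ^ 2 / 2)) := by
          have := hIh.comp_neg
          refine this.congr (Filter.Eventually.of_forall fun u => ?_)
          simp [neg_sq]
        have hAval : (∫ u : ℝ, ψ m (-u) * ψ k u * Real.exp (-u ^ 2 / 2)) = 0 := by
          have hsub : (∫ u : ℝ, ψ m (-u) * ψ k u * Real.exp (-u ^ 2 / 2))
              = ∫ u : ℝ, ψ m u * ψ k (-u) * Real.exp (-u ^ 2 / 2) := by
            rw [show (fun u : ℝ => ψ m (-u) * ψ k u * Real.exp (-u ^ 2 / 2))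
                = fun u => ψ m (-u) * ψ k (- -u) * Real.exp (-(-u) ^ 2 / 2)
              from funext fun u => by rw [neg_neg, neg_sq]]
            exact integral_neg_eq_self (fun u : ℝ => ψ m u * ψ k (-u) * Real.exp (-u ^ 2 / 2)) _
          rw [hsub,
            show (fun u : ℝ => ψ m u * ψ k (-u) * Real.exp (-u ^ 2 / 2))
              = fun u => (-1 : ℝ) ^ k * (ψ m u * ψ k u * Real.exp (-u ^ 2 / 2))
            from funext fun u => by rw [ih k hk u]; ring,
            integral_const_mul, horth m k, if_neg (by omega)]
          ring
        have h2 : (∫ u : ℝ, q.eval u * ψ k u * Real.exp (-u ^ 2 / 2)) = 0 := by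
          rw [show (fun u : ℝ => q.eval u * ψ k u * Real.exp (-u ^ 2 / 2))
              = fun u => ψ m (-u) * ψ k u * Real.exp (-u ^ 2 / 2)
                - (-1 : ℝ) ^ m * (ψ m u * ψ k u * Real.exp (-u ^ 2 / 2))
            from funext fun u => by rw [hqe u]; ring]
          rw [integral_sub hA ((horthint m k).const_mul _), hAval,
            integral_const_mul, horth m k, if_neg (by omega)]
          ring
        rw [← h1, h2]
      intro u
      have := hqe u
      rw [hc u, Finset.sum_congr rfl (fun j hj => by
        rw [hzero j (Finset.mem_range.mp hj), zero_mul])] at this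
      simp only [Finset.sum_const_zero] at this
      linarith

/-- The Hermite-type kernel `K(u) = Σ_{m=0}^{2s+2} ψ_m(0) ψ_m(u) exp(−u²/2)`, built from
the orthonormal Hermite polynomials for the weight `exp(−u²/2)`, is a symmetric, bounded
kernel of order `2s+2` with finite `(2s+2)`-th absolute moment. -/
theorem stmt15 (s : ℕ) (ψ : ℕ → ℝ → ℝ)
    (hpoly : ∀ m, ∃ p : Polynomial ℝ, p.natDegree = m ∧ ∀ u, ψ m u = p.eval u)
    (horthint : ∀ m j, Integrable (fun u : ℝ => ψ m u * ψ j u * Real.exp (-u ^ 2 / 2)))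
    (horth : ∀ m j, ∫ u : ℝ, ψ m u * ψ j u * Real.exp (-u ^ 2 / 2)
      = if m = j then 1 else 0)
    (K : ℝ → ℝ)
    (hK : ∀ u, K u = ∑ m ∈ Finset.range (2 * s + 3),
      ψ m 0 * ψ m u * Real.exp (-u ^ 2 / 2)) :
    (∀ u, K (-u) = K u) ∧
    (∃ B : ℝ, ∀ u, |K u| ≤ B) ∧
    (∀ j ≤ 2 * s + 1, ∫ u : ℝ, u ^ j * K u = if j = 0 then 1 else 0) ∧
    Integrable (fun u : ℝ => |u| ^ (2 * s + 2) * |K u|) := by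
  have h00 : (∫ u : ℝ, ψ 0 u * ψ 0 u * Real.exp (-u ^ 2 / 2)) = 1 := by
    simpa using horth 0 0
  have hspan := span_lemma15 ψ hpoly h00
  have hpar := parity15 ψ hpoly horthint horth
  refine ⟨?_, ?_, ?_, ?_⟩
  · -- symmetry
    intro u
    rw [hK, hK]
    refine Finset.sum_congr rfl fun m _ => ?_
    have h0 : ψ m 0 = (-1 : ℝ) ^ m * ψ m 0 := by simpa using hpar m 0
    rw [hpar m u, neg_sq]
    have hmm : ψ m 0 * ((-1 : ℝ) ^ m * ψ m u) = ψ m 0 * ψ m u := by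
      calc ψ m 0 * ((-1 : ℝ) ^ m * ψ m u) = ((-1 : ℝ) ^ m * ψ m 0) * ψ m u := by ring
        _ = ψ m 0 * ψ m u := by rw [← h0]
    rw [hmm]
  · -- boundedness
    have hbd : ∀ m : ℕ, ∃ B : ℝ, ∀ u, |ψ m 0 * ψ m u * Real.exp (-u ^ 2 / 2)| ≤ B := by
      intro m
      obtain ⟨p, hd, he⟩ := hpoly m
      refine ⟨|ψ m 0| * ∑ k ∈ Finset.range (p.natDegree + 1),
        |p.coeff k| * (k.factorial * Real.exp (1/2)), fun u => ?_⟩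
      rw [abs_mul, abs_mul, Real.abs_exp, mul_assoc]
      refine mul_le_mul_of_nonneg_left ?_ (abs_nonneg _)
      rw [he]
      calc |p.eval u| * Real.exp (-u ^ 2 / 2)
          ≤ (∑ k ∈ Finset.range (p.natDegree + 1), |p.coeff k| * |u| ^ k)
              * Real.exp (-u ^ 2 / 2) :=
            mul_le_mul_of_nonneg_right (poly_abs_le15 p u) (Real.exp_pos _).le
        _ = ∑ k ∈ Finset.range (p.natDegree + 1),
              |p.coeff k| * (|u| ^ k * Real.exp (-u ^ 2 / 2)) := by
            rw [Finset.sum_mul]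
            exact Finset.sum_congr rfl fun k _ => by ring
        _ ≤ ∑ k ∈ Finset.range (p.natDegree + 1),
              |p.coeff k| * (k.factorial * Real.exp (1/2)) :=
            Finset.sum_le_sum fun k _ =>
              mul_le_mul_of_nonneg_left (pow_gauss_le15 k u) (abs_nonneg _)
    choose B hB using hbd
    refine ⟨∑ m ∈ Finset.range (2 * s + 3), B m, fun u => ?_⟩
    rw [hK]
    exact (Finset.abs_sum_le_sum_abs _ _).trans (Finset.sum_le_sum fun m _ => hB m u)
  · -- moments
    intro j hj
    obtain ⟨c, hc⟩ := hspan j (Polynomial.X ^ j) (by simp)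
    have hcc : ∀ u : ℝ, u ^ j = ∑ k ∈ Finset.range (j + 1), c k * ψ k u := by
      intro u
      have := hc u
      simpa using this
    have hfun : (fun u : ℝ => u ^ j * K u)
        = fun u => ∑ m ∈ Finset.range (2 * s + 3), ψ m 0 *
            ((∑ k ∈ Finset.range (j + 1), c k * ψ k u) * ψ m u * Real.exp (-u ^ 2 / 2)) := by
      funext u
      rw [hK, Finset.mul_sum]
      refine Finset.sum_congr rfl fun m _ => ?_
      rw [← hcc u]
      ring
    rw [hfun, integral_finset_sum _ fun m _ =>
      (comb_integrable15 ψ horthint (j + 1) c m).const_mul _]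
    have hval : ∀ m : ℕ, (∫ u : ℝ, ψ m 0 *
        ((∑ k ∈ Finset.range (j + 1), c k * ψ k u) * ψ m u * Real.exp (-u ^ 2 / 2)))
        = ψ m 0 * (if m < j + 1 then c m else 0) := fun m => by
      rw [integral_const_mul, int_comb15 ψ horthint horth (j + 1) c m]
    rw [Finset.sum_congr rfl fun m _ => hval m]
    have hsub : Finset.range (j + 1) ⊆ Finset.range (2 * s + 3) :=
      Finset.range_subset_range.mpr (by omega)
    rw [← Finset.sum_subset hsub (fun m _ hm => by
      rw [if_neg (by simpa [Finset.mem_range] using hm), mul_zero])]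
    rw [Finset.sum_congr rfl fun m hm => by
      rw [if_pos (Finset.mem_range.mp hm)]]
    have h0j := hcc 0
    rw [show ∑ m ∈ Finset.range (j + 1), ψ m 0 * c m
        = ∑ k ∈ Finset.range (j + 1), c k * ψ k 0 from
      Finset.sum_congr rfl fun m _ => mul_comm _ _, ← h0j]
    exact zero_pow_eq j
  · -- integrability of (2s+2)-th absolute moment
    have hcont : ∀ m : ℕ, Continuous (ψ m) := by
      intro m
      obtain ⟨p, _, he⟩ := hpoly m
      rw [show ψ m = fun u => p.eval u from funext he]
      exact p.continuous
    have hKcont : Continuous K := by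
      rw [show K = fun u => ∑ m ∈ Finset.range (2 * s + 3),
        ψ m 0 * ψ m u * Real.exp (-u ^ 2 / 2) from funext hK]
      refine continuous_finset_sum _ fun m _ => ?_
      exact (continuous_const.mul (hcont m)).mul (Real.continuous_exp.comp (by fun_prop))
    refine Integrable.mono'
      (g := fun u => ∑ m ∈ Finset.range (2 * s + 3),
        |ψ m 0| * (|u| ^ (2 * s + 2) * (|ψ m u| * Real.exp (-u ^ 2 / 2)))) ?_
      ((continuous_abs.pow _).mul hKcont.abs).aestronglyMeasurable ?_
    · refine integrable_finset_sum _ fun m _ => ?_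
      obtain ⟨p, _, he⟩ := hpoly m
      simp only [he]
      exact (int_pow_poly15 (2 * s + 2) p).const_mul _
    · refine Filter.Eventually.of_forall fun u => ?_
      rw [Real.norm_eq_abs, abs_of_nonneg (by positivity)]
      calc |u| ^ (2 * s + 2) * |K u|
          ≤ |u| ^ (2 * s + 2) * ∑ m ∈ Finset.range (2 * s + 3),
              |ψ m 0 * ψ m u * Real.exp (-u ^ 2 / 2)| := by
            refine mul_le_mul_of_nonneg_left ?_ (by positivity)
            rw [hK]
            exact Finset.abs_sum_le_sum_abs _ _
        _ = ∑ m ∈ Finset.range (2 * s + 3),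
              |ψ m 0| * (|u| ^ (2 * s + 2) * (|ψ m u| * Real.exp (-u ^ 2 / 2))) := by
            rw [Finset.mul_sum]
            refine Finset.sum_congr rfl fun m _ => ?_
            rw [abs_mul, abs_mul, Real.abs_exp]
            ring
end

section
/- Let μ̃, ν̃ be probability measures on ℝ^d with finite second moments such that an optimal coupling γ between them for the squared-Euclidean cost exists, and suppose the barycentric projection T_γ satisfies T_γ # μ̃ = ν̃ (i.e., T_γ is a transport map). Then the coupling (Id, T_γ) # μ̃ is optimal, namely ∫‖x − T_γ(x)‖² dμ̃(x) = W₂²(μ̃, ν̃). -/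
/-!
Let `(X, Y) ∼ γ`. Since `X` is `σ(X)`-measurable, the pull-out property of conditional expectation
gives `E⟪X, T X⟫ = E⟪X, E[Y | X]⟫ = E⟪X, Y⟫`, and `T # μ̃ = ν̃` gives `E‖T X‖² = E‖Y‖²`. Expanding
the squares, the cost of `(Id, T) # μ̃` is then equal to the cost of `γ`, which is optimal.
-/

open MeasureTheory

open scoped RealInnerProductSpace

namespace MeasureTheory

variable {Ω E : Type*} {m mΩ : MeasurableSpace Ω} {μ : Measure Ω}
  [NormedAddCommGroup E] [InnerProductSpace ℝ E] {X Y Z : Ω → E}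

theorem MemLp.integrable_inner (hX : MemLp X 2 μ) (hY : MemLp Y 2 μ) :
    Integrable (fun ω ↦ ⟪X ω, Y ω⟫) μ :=
  memLp_one_iff_integrable.1 <| (innerSL ℝ).memLp_of_bilin 1 hX hY

theorem integral_norm_sub_sq (hX : MemLp X 2 μ) (hY : MemLp Y 2 μ) :
    ∫ ω, ‖X ω - Y ω‖ ^ 2 ∂μ =
      ∫ ω, ‖X ω‖ ^ 2 ∂μ - 2 * ∫ ω, ⟪X ω, Y ω⟫ ∂μ + ∫ ω, ‖Y ω‖ ^ 2 ∂μ := by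
  have hX2 := (memLp_two_iff_integrable_sq_norm hX.1).1 hX
  have hY2 := (memLp_two_iff_integrable_sq_norm hY.1).1 hY
  have hXY := (hX.integrable_inner hY).const_mul 2
  simp_rw [norm_sub_sq_real]
  rw [integral_add (f := fun ω ↦ ‖X ω‖ ^ 2 - 2 * ⟪X ω, Y ω⟫) (hX2.sub hXY) hY2,
    integral_sub hX2 hXY, integral_const_mul]

variable [CompleteSpace E] [IsFiniteMeasure μ]

theorem integral_inner_condExp_of_aestronglyMeasurable (hm : m ≤ mΩ)
    (hXm : AEStronglyMeasurable[m] X μ) (hX : MemLp X 2 μ) (hY : MemLp Y 2 μ) :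
    ∫ ω, ⟪X ω, μ[Y | m] ω⟫ ∂μ = ∫ ω, ⟪X ω, Y ω⟫ ∂μ := by
  rw [← integral_condExp hm (f := fun ω ↦ ⟪X ω, Y ω⟫)]
  refine (integral_congr_ae ?_).symm
  exact condExp_bilin_of_aestronglyMeasurable_left (innerSL ℝ) hXm (hX.integrable_inner hY)
    (hY.integrable one_le_two)

theorem integral_norm_sub_sq_eq_of_ae_eq_condExp (hm : m ≤ mΩ)
    (hXm : AEStronglyMeasurable[m] X μ) (hX : MemLp X 2 μ) (hY : MemLp Y 2 μ)
    (hZ : Z =ᵐ[μ] μ[Y | m]) (hZY : ∫ ω, ‖Z ω‖ ^ 2 ∂μ = ∫ ω, ‖Y ω‖ ^ 2 ∂μ) :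
    ∫ ω, ‖X ω - Z ω‖ ^ 2 ∂μ = ∫ ω, ‖X ω - Y ω‖ ^ 2 ∂μ := by
  have hZ2 : MemLp Z 2 μ := (hY.condExp one_le_two).ae_eq hZ.symm
  have hcross : ∫ ω, ⟪X ω, Z ω⟫ ∂μ = ∫ ω, ⟪X ω, Y ω⟫ ∂μ := by
    rw [← integral_inner_condExp_of_aestronglyMeasurable hm hXm hX hY]
    exact integral_congr_ae (hZ.mono fun ω h ↦ congrArg (⟪X ω, ·⟫) h)
  rw [integral_norm_sub_sq hX hZ2, integral_norm_sub_sq hX hY, hcross, hZY]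

end MeasureTheory

theorem stmt19_general {d : ℕ} (μt νt : Measure (EuclideanSpace ℝ (Fin d)))
    (h2μ : MemLp (id : EuclideanSpace ℝ (Fin d) → EuclideanSpace ℝ (Fin d)) 2 μt)
    (h2ν : MemLp (id : EuclideanSpace ℝ (Fin d) → EuclideanSpace ℝ (Fin d)) 2 νt)
    (γ : Measure (EuclideanSpace ℝ (Fin d) × EuclideanSpace ℝ (Fin d)))
    [IsProbabilityMeasure γ]
    (hγ1 : γ.map Prod.fst = μt) (hγ2 : γ.map Prod.snd = νt)
    (hγopt : ∫ p, ‖p.1 - p.2‖ ^ 2 ∂γ = W2sq μt νt)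
    (Tγ : EuclideanSpace ℝ (Fin d) → EuclideanSpace ℝ (Fin d)) (hTγm : Measurable Tγ)
    (hTγ : (fun p => Tγ p.1) =ᵐ[γ]
      γ[(fun p => p.2) | MeasurableSpace.comap Prod.fst inferInstance])
    (hpush : μt.map Tγ = νt) :
    ∫ x, ‖x - Tγ x‖ ^ 2 ∂μt = W2sq μt νt := by
  have hfst : MemLp Prod.fst 2 γ := by
    rw [← hγ1] at h2μ
    exact (memLp_map_measure_iff aestronglyMeasurable_id measurable_fst.aemeasurable).1 h2μ
  have hsnd : MemLp Prod.snd 2 γ := by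
    rw [← hγ2] at h2ν
    exact (memLp_map_measure_iff aestronglyMeasurable_id measurable_snd.aemeasurable).1 h2ν
  have hfst_comap : AEStronglyMeasurable[MeasurableSpace.comap Prod.fst inferInstance]
      (Prod.fst : EuclideanSpace ℝ (Fin d) × EuclideanSpace ℝ (Fin d) → _) γ :=
    (comap_measurable Prod.fst).aestronglyMeasurable
  have hmoment : ∫ p, ‖Tγ p.1‖ ^ 2 ∂γ = ∫ p, ‖p.2‖ ^ 2 ∂γ := calc
    _ = ∫ x, ‖Tγ x‖ ^ 2 ∂μt := by
      rw [← hγ1, integral_map measurable_fst.aemeasurable (by fun_prop)]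
    _ = ∫ y, ‖y‖ ^ 2 ∂νt := by rw [← hpush, integral_map hTγm.aemeasurable (by fun_prop)]
    _ = ∫ p, ‖p.2‖ ^ 2 ∂γ := by
      rw [← hγ2, integral_map measurable_snd.aemeasurable (by fun_prop)]
  rw [← hγopt, ← hγ1, integral_map measurable_fst.aemeasurable (by fun_prop)]
  exact integral_norm_sub_sq_eq_of_ae_eq_condExp measurable_fst.comap_le hfst_comap hfst hsnd
    hTγ hmoment

/-- If the barycentric projection `Tγ` of an optimal coupling `γ` pushes `μ̃` to `ν̃`,
then `(Id, Tγ) # μ̃` is optimal: `∫‖x − Tγ(x)‖² dμ̃ = W₂²(μ̃, ν̃)`. -/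
theorem stmt19 {d : ℕ} (μt νt : Measure (EuclideanSpace ℝ (Fin d)))
    [IsProbabilityMeasure μt] [IsProbabilityMeasure νt]
    (h2μ : MemLp (id : EuclideanSpace ℝ (Fin d) → EuclideanSpace ℝ (Fin d)) 2 μt)
    (h2ν : MemLp (id : EuclideanSpace ℝ (Fin d) → EuclideanSpace ℝ (Fin d)) 2 νt)
    (γ : Measure (EuclideanSpace ℝ (Fin d) × EuclideanSpace ℝ (Fin d)))
    [IsProbabilityMeasure γ]
    (hγ1 : γ.map Prod.fst = μt) (hγ2 : γ.map Prod.snd = νt)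
    (hγopt : ∫ p, ‖p.1 - p.2‖ ^ 2 ∂γ = W2sq μt νt)
    (Tγ : EuclideanSpace ℝ (Fin d) → EuclideanSpace ℝ (Fin d)) (hTγm : Measurable Tγ)
    (hTγ : (fun p => Tγ p.1) =ᵐ[γ]
      γ[(fun p => p.2) | MeasurableSpace.comap Prod.fst inferInstance])
    (hpush : μt.map Tγ = νt) :
    ∫ x, ‖x - Tγ x‖ ^ 2 ∂μt = W2sq μt νt :=
  stmt19_general μt νt h2μ h2ν γ hγ1 hγ2 hγopt Tγ hTγm hTγ hpush
end
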